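/- arXiv:2602.03259 — 4 statements merged into one kernel-verified Lean document; each statement's English description precedes it below -/
import Mathlib

section
/- For 3 ≤ n ≤ 8, the strong odd chromatic number of the wheel W_n = C_n ∨ K_1 equals n + 1. -/
open SimpleGraph

/-- A coloring `φ` of the vertices of `G` is a strong odd coloring if it is proper and,
for every vertex `v` and every color `c`, the number of neighbors of `v` colored `c`
is either zero or odd. -/
def IsStrongOddColoring {V α : Type*} (G : SimpleGraph V) (φ : V → α) : Prop :=
  (∀ u v : V, G.Adj u v → φ u ≠ φ v) ∧
  ∀ (v : V) (c : α),
    {u : V | G.Adj v u ∧ φ u = c}.ncard = 0 ∨ Odd {u : V | G.Adj v u ∧ φ u = c}.ncard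

/-- The strong odd chromatic number: the least `k` such that `G` admits a strong odd
coloring with `k` colors. -/
noncomputable def strongOddChromaticNumber {V : Type*} (G : SimpleGraph V) : ℕ :=
  sInf {k : ℕ | ∃ φ : V → Fin k, IsStrongOddColoring G φ}

/-- The join `G ∨ H` of two graphs: disjoint copies of `G` and `H` together with all
edges between them. -/
def joinGraph {V W : Type*} (G : SimpleGraph V) (H : SimpleGraph W) :
    SimpleGraph (V ⊕ W) where
  Adj x y :=
    match x, y with
    | Sum.inl a, Sum.inl b => G.Adj a b
    | Sum.inl _, Sum.inr _ => True
    | Sum.inr _, Sum.inl _ => True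
    | Sum.inr a, Sum.inr b => H.Adj a b
  symm := ⟨by rintro (a | a) (b | b) h <;> first | exact h.symm | trivial⟩
  loopless := ⟨by rintro (a | a) h <;> first | exact G.irrefl h | exact H.irrefl h⟩

/-- The wheel graph `W_n = C_n ∨ K_1`. -/
def wheelGraph (n : ℕ) : SimpleGraph (Fin n ⊕ Fin 1) :=
  joinGraph (cycleGraph n) (⊥ : SimpleGraph (Fin 1))

/-- `G_n = C_n ∨ K̄_2`; the two vertices of `K̄_2` are `x_n = Sum.inr 0` and
`y_n = Sum.inr 1`. -/
def cycleJoinTwo (n : ℕ) : SimpleGraph (Fin n ⊕ Fin 2) :=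
  joinGraph (cycleGraph n) (⊥ : SimpleGraph (Fin 2))

/-- The one point union of graphs `G` and `H`, obtained by identifying the vertex
`a` of `G` with the vertex `b` of `H` (the identified vertex is `Sum.inl a`). -/
def onePointUnion {V W : Type*} (G : SimpleGraph V) (H : SimpleGraph W) (a : V) (b : W) :
    SimpleGraph (V ⊕ {w : W // w ≠ b}) where
  Adj x y :=
    match x, y with
    | Sum.inl u, Sum.inl v => G.Adj u v
    | Sum.inl u, Sum.inr v => u = a ∧ H.Adj b v.1
    | Sum.inr v, Sum.inl u => u = a ∧ H.Adj b v.1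
    | Sum.inr u, Sum.inr v => H.Adj u.1 v.1
  symm := ⟨by
    rintro (u | u) (v | v) h
    · exact h.symm
    · exact h
    · exact h
    · exact h.symm⟩
  loopless := ⟨by
    rintro (u | u) h
    · exact G.irrefl h
    · exact H.irrefl h⟩

/-- `I_y(G_m, G_n)`: the one point union of `G_m = C_m ∨ K̄_2` and `G_n = C_n ∨ K̄_2`
obtained by identifying the vertices `y_m` and `y_n`. -/
def Iy (m n : ℕ) :
    SimpleGraph ((Fin m ⊕ Fin 2) ⊕ {w : Fin n ⊕ Fin 2 // w ≠ Sum.inr 1}) :=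
  onePointUnion (cycleJoinTwo m) (cycleJoinTwo n) (Sum.inr 1) (Sum.inr 1)

/-- A planar embedding of a graph `G`: an injective placement of the vertices in the
plane together with, for each edge, an arc (injective path) joining the images of its
endpoints, such that arcs do not pass through images of other vertices and two arcs of
distinct edges meet only in common endpoints. -/
structure PlanarEmbedding {V : Type*} (G : SimpleGraph V) where
  vmap : V → ℝ × ℝ
  vmap_inj : Function.Injective vmap
  arc : ∀ u v : V, G.Adj u v → Path (vmap u) (vmap v)
  arc_symm : ∀ (u v : V) (h : G.Adj u v), arc v u h.symm = (arc u v h).symm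
  arc_inj : ∀ (u v : V) (h : G.Adj u v), Function.Injective (arc u v h)
  arc_vertex : ∀ (u v : V) (h : G.Adj u v) (w : V),
    vmap w ∈ Set.range (arc u v h) → w = u ∨ w = v
  arc_disjoint : ∀ (u v u' v' : V) (h : G.Adj u v) (h' : G.Adj u' v'),
    s(u, v) ≠ s(u', v') →
    Set.range (arc u v h) ∩ Set.range (arc u' v' h') ⊆
      ({vmap u, vmap v} ∩ {vmap u', vmap v'} : Set (ℝ × ℝ))

/-- A graph is planar if it admits a planar embedding. -/
def IsPlanar {V : Type*} (G : SimpleGraph V) : Prop :=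
  Nonempty (PlanarEmbedding G)

/-!
An injective colouring is trivially a strong odd colouring, so `n + 1` colours suffice.
Conversely, the hub of a strong odd colouring of `W_n` has a colour of its own. Hence a rim
vertex has at most two neighbours of any other colour `c`, so by parity at most one, while the
hub sees the whole rim class of `c`, which therefore has odd size. A rim class is thus a set of
vertices of `C_n` with pairwise disjoint closed neighbourhoods, each of size `3`; if it had two
vertices it would have three, and `C_n` would need `n ≥ 9` vertices.
-/

namespace SimpleGraph

section ClosedNeighborhoods

variable {V : Type*} [Fintype V] [DecidableEq V] {G : SimpleGraph V} [DecidableRel G.Adj]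

theorem pairwiseDisjoint_closedNeighborFinset {S : Set V}
    (hind : ∀ s ∈ S, ∀ t ∈ S, ¬G.Adj s t)
    (huniq : ∀ x, ∀ s ∈ S, ∀ t ∈ S, G.Adj x s → G.Adj x t → s = t) :
    S.PairwiseDisjoint fun s => insert s (G.neighborFinset s) := by
  intro s hs t ht hst
  rw [Function.onFun, Finset.disjoint_left]
  intro x hxs hxt
  simp only [Finset.mem_insert, mem_neighborFinset] at hxs hxt
  rcases hxs with rfl | hsx <;> rcases hxt with rfl | htx
  · exact hst rfl
  · exact hind t ht x hs htx
  · exact hind s hs x ht hsx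
  · exact hst (huniq x s hs t ht hsx.symm htx.symm)

theorem card_mul_succ_le_of_pairwiseDisjoint {d : ℕ} (hG : G.IsRegularOfDegree d)
    {S : Finset V} (hS : (S : Set V).PairwiseDisjoint fun s => insert s (G.neighborFinset s)) :
    S.card * (d + 1) ≤ Fintype.card V :=
  calc S.card * (d + 1) = ∑ s ∈ S, (insert s (G.neighborFinset s)).card := by
        rw [Finset.sum_congr rfl fun s _ => by
          rw [Finset.card_insert_of_notMem (G.notMem_neighborFinset_self s),
            card_neighborFinset_eq_degree, hG.degree_eq]]
        simp
    _ = (S.biUnion fun s => insert s (G.neighborFinset s)).card := (Finset.card_biUnion hS).symm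
    _ ≤ Fintype.card V := Finset.card_le_univ _

end ClosedNeighborhoods

theorem cycleGraph_isRegularOfDegree {n : ℕ} (hn : 3 ≤ n) :
    (cycleGraph n).IsRegularOfDegree 2 := by
  obtain ⟨m, rfl⟩ := Nat.exists_eq_add_of_le' hn
  exact fun _ => cycleGraph_degree_three_le

end SimpleGraph

section StrongOddColoring

variable {V α : Type*} {G : SimpleGraph V} {φ : V → α}

theorem isStrongOddColoring_of_injective (hφ : Function.Injective φ) :
    IsStrongOddColoring G φ := by
  refine ⟨fun u v huv hcol => G.ne_of_adj huv (hφ hcol), fun v c => ?_⟩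
  have hsub : {u | G.Adj v u ∧ φ u = c}.Subsingleton :=
    fun a ha b hb => hφ (ha.2.trans hb.2.symm)
  rcases hsub.eq_empty_or_singleton with h | ⟨x, h⟩ <;> simp [h]

theorem IsStrongOddColoring.ncard_le_one_of_le_two (hφ : IsStrongOddColoring G φ) {v : V}
    {c : α} (h : {u | G.Adj v u ∧ φ u = c}.ncard ≤ 2) :
    {u | G.Adj v u ∧ φ u = c}.ncard ≤ 1 := by
  rcases hφ.2 v c with h0 | ⟨r, hr⟩ <;> omega

end StrongOddColoring

section Wheel

open Sum

variable {α : Type*} {n : ℕ} {φ : Fin n ⊕ Fin 1 → α}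

theorem wheelGraph_hub_coloredNeighbors_eq_image (c : α) :
    {u | (wheelGraph n).Adj (inr 0) u ∧ φ u = c} = inl '' {y | φ (inl y) = c} := by
  ext (y | y)
  · simp only [Set.mem_ofPred_eq, Set.mem_image, inl.injEq, exists_eq_right]
    exact and_iff_right trivial
  · simp only [Set.mem_ofPred_eq, Set.mem_image, reduceCtorEq, and_false, exists_false,
      iff_false, not_and]
    exact fun h => h.elim

theorem IsStrongOddColoring.wheelGraph_rim_eq_of_adj (hn : 3 ≤ n)
    (hφ : IsStrongOddColoring (wheelGraph n) φ) {x y z : Fin n} (hy : (cycleGraph n).Adj x y)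
    (hz : (cycleGraph n).Adj x z) (hyz : φ (inl y) = φ (inl z)) : y = z := by
  set T := {u | (wheelGraph n).Adj (inl x) u ∧ φ u = φ (inl y)}
  have hsub : T ⊆ inl '' (cycleGraph n).neighborSet x := by
    rintro (w | w) ⟨hadj, hcol⟩
    · exact ⟨w, hadj, rfl⟩
    · exact (hφ.1 (inl y) (inr w) trivial hcol.symm).elim
  have htwo : T.ncard ≤ 2 :=
    calc T.ncard ≤ (inl '' (cycleGraph n).neighborSet x).ncard := Set.ncard_le_ncard hsub
      _ = (cycleGraph n).degree x := by
        rw [Set.ncard_image_of_injective _ inl_injective, Set.ncard_eq_toFinset_card']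
        rfl
      _ = 2 := (cycleGraph_isRegularOfDegree hn).degree_eq x
  have hone := hφ.ncard_le_one_of_le_two htwo
  exact inl_injective <| (Set.ncard_le_one_iff).mp hone ⟨hy, rfl⟩ ⟨hz, hyz.symm⟩

theorem IsStrongOddColoring.nine_le_of_wheelGraph_rim_eq (hn : 3 ≤ n)
    (hφ : IsStrongOddColoring (wheelGraph n) φ) {i j : Fin n} (hij : i ≠ j)
    (hcol : φ (inl i) = φ (inl j)) : 9 ≤ n := by
  classical
  set S : Finset (Fin n) := Finset.univ.filter fun y => φ (inl y) = φ (inl i)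
  have hS : (S : Set (Fin n)) = {y | φ (inl y) = φ (inl i)} := by simp [S]
  have hodd : S.card = 0 ∨ Odd S.card := by
    have := hφ.2 (inr 0) (φ (inl i))
    rwa [wheelGraph_hub_coloredNeighbors_eq_image, Set.ncard_image_of_injective _ inl_injective,
      ← hS, Set.ncard_coe_finset] at this
  have htwo : 2 ≤ S.card := by
    rw [← Finset.card_pair hij]
    exact Finset.card_le_card fun y hy => by
      rcases Finset.mem_insert.mp hy with rfl | hy
      · simp [S]
      · simp [S, Finset.mem_singleton.mp hy, hcol]
  have hpack : S.card * (2 + 1) ≤ Fintype.card (Fin n) := by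
    refine card_mul_succ_le_of_pairwiseDisjoint (cycleGraph_isRegularOfDegree hn)
      (pairwiseDisjoint_closedNeighborFinset ?_ ?_)
    · intro s hs t ht hst
      simp only [hS, Set.mem_ofPred_eq] at hs ht
      exact hφ.1 (inl s) (inl t) hst (hs.trans ht.symm)
    · intro x s hs t ht hxs hxt
      simp only [hS, Set.mem_ofPred_eq] at hs ht
      exact hφ.wheelGraph_rim_eq_of_adj hn hxs hxt (hs.trans ht.symm)
  rw [Fintype.card_fin] at hpack
  rcases hodd with h0 | ⟨r, hr⟩ <;> omega

theorem IsStrongOddColoring.injective_of_wheelGraph (h3 : 3 ≤ n) (h8 : n ≤ 8)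
    (hφ : IsStrongOddColoring (wheelGraph n) φ) : Function.Injective φ := by
  rintro (i | a) (j | b) h
  · by_contra hij
    have := hφ.nine_le_of_wheelGraph_rim_eq h3 (fun h => hij (congrArg inl h)) h
    omega
  · exact (hφ.1 (inl i) (inr b) trivial h).elim
  · exact (hφ.1 (inr a) (inl j) trivial h).elim
  · rw [Subsingleton.elim a b]

end Wheel

/-- For `3 ≤ n ≤ 8`, the strong odd chromatic number of the wheel `W_n = C_n ∨ K_1`
equals `n + 1`. -/
theorem stmt_2 (n : ℕ) (h3 : 3 ≤ n) (h8 : n ≤ 8) :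
    strongOddChromaticNumber (wheelGraph n) = n + 1 := by
  have hupper : IsStrongOddColoring (wheelGraph n)
      (finSumFinEquiv : Fin n ⊕ Fin 1 ≃ Fin (n + 1)) :=
    isStrongOddColoring_of_injective finSumFinEquiv.injective
  refine le_antisymm (Nat.sInf_le ⟨_, hupper⟩) (le_csInf ⟨_, _, hupper⟩ ?_)
  rintro k ⟨φ, hφ⟩
  simpa using Fintype.card_le_of_injective φ (hφ.injective_of_wheelGraph h3 h8)
end

section
/- If n > 8, n ≠ 14, n ≠ 15, and n ≡ 0, 2 or 4 (mod 6), then the strong odd chromatic number of the wheel W_n = C_n ∨ K_1 equals 5. -/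
open SimpleGraph

/-! Every rim vertex of `W_n` is adjacent to the hub, so each colour used on the rim occurs an odd
number of times there and the number of rim colours has the parity of `n`. A rim vertex sees its
two rim neighbours and the hub, which carries a colour of its own, so the two rim neighbours must
get different colours: three consecutive rim vertices use three colours. For even `n` the rim
thus needs at least four colours, and the hub a fifth.

Conversely, every admissible `n` can be written as `4a + 3b` with `a` odd and `b` even.
Colouring the rim `(0 1 2 3)^a (0 1 2)^b` and the hub `4` gives any three consecutive rim
vertices distinct colours, and the hub sees colour `3` on `a` vertices and colours `0, 1, 2`
on `a + b` vertices each. -/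

open Finset

lemma Finset.card_image_modEq_two_of_odd_fibers {ι α : Type*} [DecidableEq α] (s : Finset ι)
    (f : ι → α) (hf : ∀ c ∈ s.image f, Odd #{x ∈ s | f x = c}) :
    #(s.image f) ≡ #s [MOD 2] := by
  rw [card_eq_sum_card_image f s, Nat.ModEq, sum_nat_mod,
    sum_congr rfl fun c hc => Nat.odd_iff.mp (hf c hc), sum_const, smul_eq_mul, mul_one]

lemma Nat.count_congr_of_lt {p q : ℕ → Prop} [DecidablePred p] [DecidablePred q] {n : ℕ}
    (h : ∀ k < n, p k ↔ q k) : Nat.count p n = Nat.count q n :=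
  le_antisymm (Nat.count_mono_left fun k hk => (h k hk).mp)
    (Nat.count_mono_left fun k hk => (h k hk).mpr)

lemma Set.ncard_setOf_fin_eq_count (n : ℕ) (p : ℕ → Prop) [DecidablePred p] :
    {i : Fin n | p i}.ncard = Nat.count p n := by
  rw [← Set.ncard_image_of_injective _ Fin.val_injective, Nat.count_eq_card_filter_range,
    ← Set.ncard_coe_finset]
  congr 1
  ext k
  simp only [Set.mem_image, Set.mem_ofPred_eq, coe_filter, Finset.mem_range]
  exact ⟨fun ⟨i, hi, hik⟩ => hik ▸ ⟨i.isLt, hi⟩, fun ⟨hk, hp⟩ => ⟨⟨k, hk⟩, hp, rfl⟩⟩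

section Join

variable {V W α : Type*} {G : SimpleGraph V}

lemma IsStrongOddColoring.exists_adj_ne_ne {φ : V → α} (hφ : IsStrongOddColoring G φ)
    {v u w : V} (hu : G.Adj v u) (hw : G.Adj v w) (huw : u ≠ w) (h : φ u = φ w) :
    ∃ x, G.Adj v x ∧ φ x = φ u ∧ x ≠ u ∧ x ≠ w := by
  by_contra! hx
  have hpair : {x | G.Adj v x ∧ φ x = φ u} = {u, w} := by
    ext x
    refine ⟨fun ⟨hvx, hxc⟩ => ?_, ?_⟩
    · by_contra hne
      simp only [Set.mem_insert_iff, Set.mem_singleton_iff, not_or] at hne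
      exact hne.2 (hx x hvx hxc hne.1)
    · rintro (rfl | rfl)
      exacts [⟨hu, rfl⟩, ⟨hw, h.symm⟩]
  have := hφ.2 v (φ u)
  rw [hpair, Set.ncard_pair huw] at this
  exact this.elim (by norm_num) (by decide)

lemma setOf_joinGraph_bot_adj_inr (φ : V ⊕ W → α) (w : W) (c : α) :
    {u | (joinGraph G (⊥ : SimpleGraph W)).Adj (Sum.inr w) u ∧ φ u = c} =
      Sum.inl '' {v | φ (Sum.inl v) = c} := by
  ext (v | w') <;> simp [joinGraph]

lemma isStrongOddColoring_joinGraph_sumElim {f : V → α} {c₀ : α} (hc₀ : ∀ v, f v ≠ c₀)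
    (hproper : ∀ u v, G.Adj u v → f u ≠ f v) (hinj : ∀ v, Set.InjOn f (G.neighborSet v))
    (hodd : ∀ c, {v | f v = c}.ncard = 0 ∨ Odd {v | f v = c}.ncard) :
    IsStrongOddColoring (joinGraph G (⊥ : SimpleGraph (Fin 1))) (Sum.elim f fun _ => c₀) := by
  refine ⟨?_, ?_⟩
  · rintro (u | u) (v | v) huv
    exacts [hproper u v huv, hc₀ u, (hc₀ v).symm, absurd huv id]
  rintro (v | w) c
  · have hsub : {u | (joinGraph G (⊥ : SimpleGraph (Fin 1))).Adj (Sum.inl v) u ∧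
        Sum.elim f (fun _ => c₀) u = c}.Subsingleton := by
      rintro (u | u) ⟨hvu, rfl⟩ (u' | u') ⟨hvu', hc⟩
      · exact congrArg _ (hinj v hvu hvu' hc.symm)
      · exact absurd hc.symm (hc₀ u)
      · exact absurd hc (hc₀ u')
      · exact congrArg _ (Subsingleton.elim u u')
    rcases hsub.eq_empty_or_singleton with h | ⟨x, h⟩ <;> simp [h]
  · rw [setOf_joinGraph_bot_adj_inr, Set.ncard_image_of_injective _ Sum.inl_injective]
    exact hodd c

lemma IsStrongOddColoring.card_image_inl_modEq_two [Fintype V] [DecidableEq α]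
    {φ : V ⊕ Fin 1 → α} (hφ : IsStrongOddColoring (joinGraph G (⊥ : SimpleGraph (Fin 1))) φ) :
    #(univ.image (φ ∘ Sum.inl)) ≡ Fintype.card V [MOD 2] := by
  refine card_univ (α := V) ▸ card_image_modEq_two_of_odd_fibers _ _ fun c hc => ?_
  have hclass := hφ.2 (Sum.inr 0) c
  rw [setOf_joinGraph_bot_adj_inr, Set.ncard_image_of_injective _ Sum.inl_injective,
    Set.ncard_eq_toFinset_card', Set.toFinset_ofPred] at hclass
  obtain ⟨v, -, rfl⟩ := mem_image.mp hc
  exact hclass.resolve_left (card_ne_zero_of_mem (mem_filter.mpr ⟨mem_univ v, rfl⟩))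

end Join

lemma cycleGraph_adj_iff_val {n : ℕ} (hn : 1 < n) {u v : Fin n} :
    (cycleGraph n).Adj u v ↔ v.val = u.val + 1 ∨ u.val = v.val + 1 ∨
      (u.val = 0 ∧ v.val = n - 1) ∨ (v.val = 0 ∧ u.val = n - 1) := by
  have hu := u.isLt
  have hv := v.isLt
  rw [cycleGraph_adj']
  rcases lt_trichotomy u v with h | rfl | h
  · rw [Fin.coe_sub_iff_lt.mpr h, Fin.coe_sub_iff_le.mpr h.le]
    omega
  · rw [Fin.coe_sub_iff_le.mpr le_rfl]
    omega
  · rw [Fin.coe_sub_iff_le.mpr h.le, Fin.coe_sub_iff_lt.mpr h]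
    omega

lemma cycleGraph_eq_or_eq_or_eq_of_adj {n : ℕ} {i j k l : Fin n} (hj : (cycleGraph n).Adj i j)
    (hk : (cycleGraph n).Adj i k) (hl : (cycleGraph n).Adj i l) : j = k ∨ j = l ∨ k = l := by
  have hn : 1 < n := by
    have := Fin.val_ne_of_ne hj.ne
    omega
  rw [cycleGraph_adj_iff_val hn] at hj hk hl
  simp only [Fin.ext_iff]
  omega

lemma IsStrongOddColoring.wheelGraph_ne_of_adj_of_adj {α : Type*} {n : ℕ}
    {φ : Fin n ⊕ Fin 1 → α} (hφ : IsStrongOddColoring (wheelGraph n) φ) {i j k : Fin n}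
    (hj : (cycleGraph n).Adj i j) (hk : (cycleGraph n).Adj i k) (hjk : j ≠ k) :
    φ (Sum.inl j) ≠ φ (Sum.inl k) := by
  intro h
  obtain ⟨x, hix, hx, hxj, hxk⟩ := hφ.exists_adj_ne_ne (v := Sum.inl i) (u := Sum.inl j)
    (w := Sum.inl k) hj hk (Sum.inl_injective.ne hjk) h
  rcases x with l | w
  · rcases cycleGraph_eq_or_eq_or_eq_of_adj hj hk hix with h | h | h
    exacts [hjk h, hxj (congrArg _ h.symm), hxk (congrArg _ h.symm)]
  · exact hφ.1 (Sum.inr w) (Sum.inl j) trivial hx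

lemma five_le_of_isStrongOddColoring_wheelGraph {n k : ℕ} (hn : 2 < n) (heven : Even n)
    {φ : Fin n ⊕ Fin 1 → Fin k} (hφ : IsStrongOddColoring (wheelGraph n) φ) : 5 ≤ k := by
  set rim := univ.image (φ ∘ Sum.inl)
  have hparity : #rim ≡ n [MOD 2] := by
    simpa using hφ.card_image_inl_modEq_two
  have hhub : φ (Sum.inr 0) ∉ rim := by
    simp only [rim, mem_image, mem_univ, true_and, Function.comp_apply, not_exists]
    exact fun i => hφ.1 (Sum.inl i) (Sum.inr 0) trivial
  have h10 : (cycleGraph n).Adj ⟨1, by omega⟩ ⟨0, by omega⟩ :=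
    (cycleGraph_adj_iff_val (by omega)).mpr (by simp)
  have h12 : (cycleGraph n).Adj ⟨1, by omega⟩ ⟨2, by omega⟩ :=
    (cycleGraph_adj_iff_val (by omega)).mpr (by simp)
  have hthree : 2 < #rim := two_lt_card.mpr
    ⟨_, mem_image_of_mem _ (mem_univ _), _, mem_image_of_mem _ (mem_univ _),
      _, mem_image_of_mem _ (mem_univ _), hφ.1 (Sum.inl _) (Sum.inl _) h10,
      hφ.1 (Sum.inl _) (Sum.inl _) h12, hφ.wheelGraph_ne_of_adj_of_adj h10 h12 (by simp)⟩
  have hle : #rim ≤ k - 1 := by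
    simpa using card_le_card (subset_erase.mpr ⟨subset_univ rim, hhub⟩)
  obtain ⟨m, rfl⟩ := heven
  unfold Nat.ModEq at hparity
  omega

def blockColoring (a i : ℕ) : ℕ := if i < 4 * a then i % 4 else (i - 4 * a) % 3

lemma blockColoring_lt_four (a i : ℕ) : blockColoring a i < 4 := by
  unfold blockColoring
  split_ifs <;> omega

lemma count_blockColoring_eq (a b : ℕ) {c : ℕ} (hc : c < 4) :
    Nat.count (blockColoring a · = c) (4 * a + 3 * b) = if c = 3 then a else a + b := by
  have hfirst : Nat.count (blockColoring a · = c) (4 * a) = a := by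
    rw [Nat.count_congr_of_lt (q := (· ≡ c [MOD 4])) fun k hk => by
        simp only [blockColoring, if_pos hk, Nat.ModEq, Nat.mod_eq_of_lt hc],
      Nat.count_modEq_card _ (by norm_num)]
    simp
  have hsecond : Nat.count (fun k => blockColoring a (4 * a + k) = c) (3 * b) =
      if c = 3 then 0 else b := by
    split_ifs with h3
    · exact Nat.count_iff_forall_not.mpr fun k _ => by
        simp only [blockColoring]
        split_ifs <;> omega
    · rw [Nat.count_congr_of_lt (q := (· ≡ c [MOD 3])) fun k _ => by
          simp only [blockColoring, Nat.ModEq]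
          split_ifs <;> omega,
        Nat.count_modEq_card _ (by norm_num)]
      simp
  rw [Nat.count_add, hfirst, hsecond]
  split_ifs <;> rfl

lemma blockColoring_ne_of_adj {a b : ℕ} (ha : 0 < a) {i j : Fin (4 * a + 3 * b)}
    (h : (cycleGraph _).Adj i j) : blockColoring a i ≠ blockColoring a j := by
  rw [cycleGraph_adj_iff_val (by omega)] at h
  unfold blockColoring
  split_ifs <;> omega

lemma blockColoring_injOn_neighborSet {a b : ℕ} (ha : 0 < a) (i : Fin (4 * a + 3 * b)) :
    Set.InjOn (blockColoring a ∘ Fin.val) ((cycleGraph _).neighborSet i) := by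
  intro j hj k hk h
  rw [mem_neighborSet, cycleGraph_adj_iff_val (by omega)] at hj hk
  rw [Fin.ext_iff]
  simp only [Function.comp_apply, blockColoring] at h
  split_ifs at h <;> omega

lemma exists_isStrongOddColoring_wheelGraph {a b : ℕ} (ha : Odd a) (hb : Even b) :
    ∃ φ : Fin (4 * a + 3 * b) ⊕ Fin 1 → Fin 5,
      IsStrongOddColoring (wheelGraph (4 * a + 3 * b)) φ := by
  have ha0 : 0 < a := ha.pos
  let f : Fin (4 * a + 3 * b) → Fin 5 := fun i => ⟨blockColoring a i, by
    have := blockColoring_lt_four a i; omega⟩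
  refine ⟨Sum.elim f fun _ => 4, isStrongOddColoring_joinGraph_sumElim ?_ ?_ ?_ ?_⟩
  · exact fun i h => (blockColoring_lt_four a i).ne (congrArg Fin.val h)
  · exact fun i j hij h => blockColoring_ne_of_adj ha0 hij (congrArg Fin.val h)
  · exact fun i j hj k hk h =>
      blockColoring_injOn_neighborSet ha0 i hj hk (congrArg Fin.val h)
  · intro c
    have hclass : {i | f i = c} = {i : Fin _ | blockColoring a i = c.val} := by
      simp [f, Fin.ext_iff]
    rw [hclass, Set.ncard_setOf_fin_eq_count _ (blockColoring a · = c.val)]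
    rcases Nat.lt_or_ge c.val 4 with hc | hc
    · right
      rw [count_blockColoring_eq a b hc]
      split_ifs
      exacts [ha, ha.add_even hb]
    · left
      exact Nat.count_iff_forall_not.mpr fun k _ =>
        ((blockColoring_lt_four a k).trans_le hc).ne

theorem stmt_4_general (n : ℕ) (hn : 8 < n) (h14 : n ≠ 14)
    (hmod : n % 6 = 0 ∨ n % 6 = 2 ∨ n % 6 = 4) :
    strongOddChromaticNumber (wheelGraph n) = 5 := by
  obtain ⟨a, b, rfl, ha, hb⟩ : ∃ a b, n = 4 * a + 3 * b ∧ Odd a ∧ Even b := by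
    rcases hmod with h | h | h
    · exact ⟨3, (n - 12) / 3, by omega, by decide, ⟨(n - 12) / 6, by omega⟩⟩
    · exact ⟨5, (n - 20) / 3, by omega, by decide, ⟨(n - 20) / 6, by omega⟩⟩
    · exact ⟨1, (n - 4) / 3, by omega, by decide, ⟨(n - 4) / 6, by omega⟩⟩
  have hcol := exists_isStrongOddColoring_wheelGraph ha hb
  refine le_antisymm (Nat.sInf_le hcol) (le_csInf ⟨5, hcol⟩ ?_)
  rintro k ⟨φ, hφ⟩
  exact five_le_of_isStrongOddColoring_wheelGraph (by omega) (Nat.even_iff.mpr (by omega)) hφ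

/-- If `n > 8`, `n ≠ 14`, `n ≠ 15` and `n ≡ 0, 2` or `4 (mod 6)`, then the strong odd
chromatic number of the wheel `W_n = C_n ∨ K_1` equals `5`. -/
theorem stmt_4 (n : ℕ) (hn : 8 < n) (h14 : n ≠ 14) (h15 : n ≠ 15)
    (hmod : n % 6 = 0 ∨ n % 6 = 2 ∨ n % 6 = 4) :
    strongOddChromaticNumber (wheelGraph n) = 5 :=
  stmt_4_general n hn h14 hmod
end

section
/- The strong odd chromatic number of the wheel W_14 = C_14 ∨ K_1 equals 7. -/
open SimpleGraph

/-!
The hub of `W_14` is adjacent to the whole rim, so every colour occurs on the rim zero or an odd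
number of times, and the hub's colour does not occur there at all. A rim vertex has exactly three
neighbours, two on the rim and the hub, whose colour differs from theirs; so the two rim
neighbours get distinct colours. Hence a colour class on the rim has gaps of length at least 3,
so at most `⌊14 / 3⌋ = 4` and therefore 1 or 3 elements. Five such classes cannot cover the 14
rim vertices, so six colours do not suffice, and an explicit colouring shows that seven do.
-/

open SimpleGraph Finset

section StrongOddColoring

variable {V α β : Type*} {G : SimpleGraph V} {φ : V → α}

theorem isStrongOddColoring_iff_card_filter [Fintype V] [DecidableRel G.Adj] [DecidableEq α] :
    IsStrongOddColoring G φ ↔ (∀ u v, G.Adj u v → φ u ≠ φ v) ∧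
      ∀ v c, #{u | G.Adj v u ∧ φ u = c} = 0 ∨ Odd #{u | G.Adj v u ∧ φ u = c} := by
  simp only [IsStrongOddColoring, Set.ncard_eq_toFinset_card', Set.toFinset_ofPred]

theorem IsStrongOddColoring.comp_injective (hφ : IsStrongOddColoring G φ) {g : α → β}
    (hg : Function.Injective g) : IsStrongOddColoring G (g ∘ φ) := by
  refine ⟨fun u v huv h => hφ.1 u v huv (hg h), fun v c => ?_⟩
  by_cases hc : c ∈ Set.range g
  · obtain ⟨c, rfl⟩ := hc
    simpa only [Function.comp_apply, hg.eq_iff] using hφ.2 v c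
  · have hempty : {u | G.Adj v u ∧ (g ∘ φ) u = c} = ∅ :=
      Set.eq_empty_of_forall_notMem fun u hu => hc ⟨φ u, hu.2⟩
    exact Or.inl (hempty ▸ Set.ncard_empty V)

/-- As `z` sees `a`, a common colour of `a` and `b` would occur exactly twice around `x`. -/
theorem IsStrongOddColoring.apply_ne_of_neighborSet_eq (hφ : IsStrongOddColoring G φ)
    {x a b z : V} (hx : G.neighborSet x = {a, b, z}) (hab : a ≠ b) (hza : G.Adj z a) :
    φ a ≠ φ b := by
  intro h
  have hclass : {u | G.Adj x u ∧ φ u = φ a} = {a, b} := by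
    ext u
    have hu := Set.ext_iff.1 hx u
    simp only [mem_neighborSet, Set.mem_insert_iff, Set.mem_singleton_iff] at hu
    simp only [Set.mem_ofPred_eq, hu, Set.mem_insert_iff, Set.mem_singleton_iff]
    constructor
    · rintro ⟨rfl | rfl | rfl, hc⟩
      exacts [Or.inl rfl, Or.inr rfl, absurd hc (hφ.1 _ _ hza)]
    · rintro (rfl | rfl)
      exacts [⟨Or.inl rfl, rfl⟩, ⟨Or.inr (Or.inl rfl), h.symm⟩]
  have h2 := hφ.2 x (φ a)
  rw [hclass, Set.ncard_pair hab] at h2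
  simp [Nat.odd_iff] at h2

theorem strongOddChromaticNumber_eq_succ_iff (G : SimpleGraph V) (k : ℕ) :
    strongOddChromaticNumber G = k + 1 ↔
      (∃ φ : V → Fin (k + 1), IsStrongOddColoring G φ) ∧
        ¬ ∃ φ : V → Fin k, IsStrongOddColoring G φ :=
  Nat.sInf_upward_closed_eq_succ_iff (by
    rintro k₁ k₂ hle ⟨φ, hφ⟩
    exact ⟨Fin.castLE hle ∘ φ, hφ.comp_injective (Fin.castLE_injective hle)⟩) k

end StrongOddColoring

/-- The translates `i + {0, a, 2 • a}` of the elements `i ∈ S` are pairwise disjoint. -/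
theorem three_mul_card_le_card_of_add_notMem {G : Type*} [AddCommGroup G] [Fintype G] (a : G)
    {S : Finset G} (hS : ∀ i ∈ S, i + a ∉ S ∧ i + 2 • a ∉ S) : 3 * #S ≤ Fintype.card G := by
  have key : ∀ i ∈ S, ∀ j ∈ S, ∀ k l : ℕ, k ≤ l → l < 3 → i + k • a = j + l • a →
      i = j ∧ k = l := by
    intro i hi j hj k l hkl hl h
    obtain ⟨d, rfl⟩ := Nat.exists_eq_add_of_le hkl
    have hij : i = j + d • a := calc
      i = i + k • a - k • a := by abel
      _ = j + d • a := by rw [h, add_nsmul]; abel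
    have hd : d < 3 := by omega
    interval_cases d
    · simpa using hij
    · exact absurd (hij ▸ hi) (by simpa using (hS j hj).1)
    · exact absurd (hij ▸ hi) (hS j hj).2
  have hinj : Set.InjOn (fun p : G × ℕ => p.1 + p.2 • a) (S ×ˢ range 3 : Finset (G × ℕ)) := by
    rintro ⟨i, k⟩ hik ⟨j, l⟩ hjl h
    simp only [coe_product, Set.mem_prod, mem_coe, mem_range] at hik hjl h
    rcases le_total k l with hkl | hlk
    · obtain ⟨rfl, rfl⟩ := key i hik.1 j hjl.1 k l hkl hjl.2 h
      rfl
    · obtain ⟨rfl, rfl⟩ := key j hjl.1 i hik.1 l k hlk hik.2 h.symm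
      rfl
  calc 3 * #S = #(S ×ˢ range 3) := by rw [card_product, card_range, mul_comm]
    _ ≤ Fintype.card G := card_le_card_of_injOn _ (fun _ _ => mem_coe.2 (mem_univ _)) hinj

instance joinGraph.instDecidableRelAdj {V W : Type*} (G : SimpleGraph V) (H : SimpleGraph W)
    [DecidableRel G.Adj] [DecidableRel H.Adj] : DecidableRel (joinGraph G H).Adj
  | Sum.inl a, Sum.inl b => inferInstanceAs (Decidable (G.Adj a b))
  | Sum.inl _, Sum.inr _ => inferInstanceAs (Decidable True)
  | Sum.inr _, Sum.inl _ => inferInstanceAs (Decidable True)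
  | Sum.inr a, Sum.inr b => inferInstanceAs (Decidable (H.Adj a b))

instance wheelGraph.instDecidableRelAdj (n : ℕ) : DecidableRel (wheelGraph n).Adj :=
  inferInstanceAs (DecidableRel (joinGraph (cycleGraph n) (⊥ : SimpleGraph (Fin 1))).Adj)

section Wheel

variable {α : Type*} {n : ℕ}

theorem IsStrongOddColoring.ncard_inl_eq_zero_or_odd {V W : Type*} {G : SimpleGraph V}
    {φ : V ⊕ W → α} (hφ : IsStrongOddColoring (joinGraph G (⊥ : SimpleGraph W)) φ) (w : W)
    (c : α) : {v | φ (Sum.inl v) = c}.ncard = 0 ∨ Odd {v | φ (Sum.inl v) = c}.ncard := by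
  have hhub : {u | (joinGraph G ⊥).Adj (Sum.inr w) u ∧ φ u = c} =
      Sum.inl '' {v | φ (Sum.inl v) = c} := by
    ext (u | u) <;> simp [joinGraph]
  rw [← Set.ncard_image_of_injective _ Sum.inl_injective, ← hhub]
  exact hφ.2 (Sum.inr w) c

theorem wheelGraph_neighborSet_inl_add_one (i : Fin (n + 3)) :
    (wheelGraph (n + 3)).neighborSet (Sum.inl (i + 1)) =
      {Sum.inl i, Sum.inl (i + 2), Sum.inr 0} := by
  ext (j | j)
  · have hcycle := Set.ext_iff.1 (cycleGraph_neighborSet (n := n + 1) (v := i + 1)) j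
    simp only [mem_neighborSet, Set.mem_insert_iff, Set.mem_singleton_iff, add_sub_cancel_right,
      add_assoc] at hcycle
    simp only [mem_neighborSet, Set.mem_insert_iff, Set.mem_singleton_iff, Sum.inl.injEq,
      reduceCtorEq, or_false]
    exact hcycle
  · simp only [mem_neighborSet, Set.mem_insert_iff, Set.mem_singleton_iff, reduceCtorEq,
      false_or, Subsingleton.elim j 0]
    exact iff_of_true trivial trivial

theorem IsStrongOddColoring.wheelGraph_rim_ne {φ : Fin (n + 3) ⊕ Fin 1 → α}
    (hφ : IsStrongOddColoring (wheelGraph (n + 3)) φ) (i : Fin (n + 3)) :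
    φ (Sum.inl i) ≠ φ (Sum.inl (i + 1)) ∧ φ (Sum.inl i) ≠ φ (Sum.inl (i + 2)) := by
  refine ⟨hφ.1 _ _ (cycleGraph_adj.2 (Or.inr (add_sub_cancel_left i 1))), ?_⟩
  refine hφ.apply_ne_of_neighborSet_eq (wheelGraph_neighborSet_inl_add_one i) ?_ trivial
  exact Sum.inl_injective.ne (left_ne_add.2 (by simp [Fin.ext_iff, Nat.mod_eq_of_lt]))

theorem IsStrongOddColoring.three_mul_ncard_wheelGraph_rim_le {φ : Fin (n + 3) ⊕ Fin 1 → α}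
    (hφ : IsStrongOddColoring (wheelGraph (n + 3)) φ) (c : α) :
    3 * {i | φ (Sum.inl i) = c}.ncard ≤ n + 3 := by
  classical
  rw [Set.ncard_eq_toFinset_card', Set.toFinset_ofPred]
  simpa using three_mul_card_le_card_of_add_notMem (1 : Fin (n + 3))
    (S := {i | φ (Sum.inl i) = c}) fun i hi => by
      simp only [mem_filter, mem_univ, true_and, two_nsmul] at hi ⊢
      exact ⟨fun h => (hφ.wheelGraph_rim_ne i).1 (hi.trans h.symm),
        fun h => (hφ.wheelGraph_rim_ne i).2 (hi.trans h.symm)⟩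

end Wheel

theorem not_isStrongOddColoring_wheelGraph_fourteen_fin_six (φ : Fin 14 ⊕ Fin 1 → Fin 6) :
    ¬ IsStrongOddColoring (wheelGraph 14) φ := by
  intro hφ
  let r : Fin 6 → ℕ := fun c => {i | φ (Sum.inl i) = c}.ncard
  have hsum : ∑ c, r c = 14 := by
    simp only [r, Set.ncard_eq_toFinset_card', Set.toFinset_ofPred]
    rw [← card_eq_sum_card_fiberwise fun _ _ => mem_univ _]
    simp
  have hhub : r (φ (Sum.inr 0)) = 0 := by
    rw [Set.ncard_eq_zero]
    exact Set.eq_empty_of_forall_notMem fun i hi => hφ.1 (Sum.inl i) (Sum.inr 0) trivial hi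
  have hclass : ∀ c, r c = 0 ∨ r c = 1 ∨ r c = 3 := fun c => by
    simp only [r]
    have hle : 3 * {i | φ (Sum.inl i) = c}.ncard ≤ 14 := hφ.three_mul_ncard_wheelGraph_rim_le c
    rcases hφ.ncard_inl_eq_zero_or_odd 0 c with h | ⟨k, hk⟩ <;> omega
  rw [Fin.sum_univ_six] at hsum
  have := hclass 0; have := hclass 1; have := hclass 2
  have := hclass 3; have := hclass 4; have := hclass 5
  generalize φ (Sum.inr 0) = h at hhub
  fin_cases h <;> simp only [Fin.zero_eta, Fin.mk_one, Fin.reduceFinMk] at hhub <;> omega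

/-- The rim classes have the odd sizes `3, 3, 3, 3, 1, 1`. -/
def wheelFourteenColoring : Fin 14 ⊕ Fin 1 → Fin 7 :=
  Sum.elim ![0, 1, 2, 3, 0, 1, 2, 3, 0, 1, 2, 3, 4, 5] fun _ => 6

set_option maxRecDepth 10000 in
theorem isStrongOddColoring_wheelFourteenColoring :
    IsStrongOddColoring (wheelGraph 14) wheelFourteenColoring := by
  rw [isStrongOddColoring_iff_card_filter]
  decide

/-- The strong odd chromatic number of the wheel `W_14 = C_14 ∨ K_1` equals `7`. -/
theorem stmt_6 : strongOddChromaticNumber (wheelGraph 14) = 7 :=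
  (strongOddChromaticNumber_eq_succ_iff _ 6).2
    ⟨⟨_, isStrongOddColoring_wheelFourteenColoring⟩,
      fun ⟨φ, hφ⟩ => not_isStrongOddColoring_wheelGraph_fourteen_fin_six φ hφ⟩
end

section
/- For every finite simple graph G, there exists a finite simple graph H containing G as an induced subgraph such that the strong odd chromatic number of H equals the chromatic number of G, i.e., χ_so(H) = χ(G). -/
open SimpleGraph

/-!
Take an optimal proper colouring `φ` of `G`. Whenever a vertex `v` sees a colour `c` a positive
even number of times, hang a new pendant vertex of colour `c` on `v`: this makes the count odd,
the new vertex sees only the colour of `v`, and `φ v ≠ c` keeps the colouring proper. The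
resulting graph thus has a strong odd colouring with `χ(G)` colours, and it cannot do with fewer
since it contains `G` as an induced subgraph.
-/

namespace SimpleGraph

variable {V W α : Type*}

def colorNeighborSet (G : SimpleGraph V) (φ : V → α) (v : V) (c : α) : Set V :=
  {u | G.Adj v u ∧ φ u = c}

section StrongOdd

variable {G : SimpleGraph V} {k : ℕ}

lemma isStrongOddColoring_iff {φ : V → α} :
    IsStrongOddColoring G φ ↔ (∀ u v, G.Adj u v → φ u ≠ φ v) ∧
      ∀ v c, (G.colorNeighborSet φ v c).ncard = 0 ∨ Odd (G.colorNeighborSet φ v c).ncard :=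
  Iff.rfl

lemma IsStrongOddColoring.comp_iso {H : SimpleGraph W} (e : G ≃g H) {φ : W → α}
    (h : IsStrongOddColoring H φ) : IsStrongOddColoring G (φ ∘ e) := by
  refine ⟨fun u v huv => h.1 _ _ (e.map_adj_iff.2 huv), fun v c => ?_⟩
  have himage :
      {u : W | H.Adj (e v) u ∧ φ u = c} = e '' {u : V | G.Adj v u ∧ φ (e u) = c} := by
    ext w
    obtain ⟨u, rfl⟩ := e.surjective w
    simp [e.injective.eq_iff, e.map_adj_iff]
  simpa [himage, Set.ncard_image_of_injective _ e.injective] using h.2 (e v) c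

lemma IsStrongOddColoring.colorable {φ : V → Fin k} (h : IsStrongOddColoring G φ) :
    G.Colorable k :=
  ⟨Coloring.mk φ fun hadj => h.1 _ _ hadj⟩

lemma strongOddChromaticNumber_le {φ : V → Fin k} (h : IsStrongOddColoring G φ) :
    strongOddChromaticNumber G ≤ k :=
  Nat.sInf_le ⟨φ, h⟩

lemma chromaticNumber_le_strongOddChromaticNumber {φ : V → Fin k}
    (h : IsStrongOddColoring G φ) : G.chromaticNumber ≤ strongOddChromaticNumber G := by
  obtain ⟨ψ, hψ⟩ :=
    Nat.sInf_mem (⟨k, φ, h⟩ : ∃ k, ∃ φ : V → Fin k, IsStrongOddColoring G φ)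
  exact hψ.colorable.chromaticNumber_le

end StrongOdd

lemma colorNeighborSet_self_eq_empty {G : SimpleGraph V} (φ : G.Coloring α) (v : V) :
    G.colorNeighborSet φ v (φ v) = ∅ :=
  Set.eq_empty_of_forall_notMem fun _ hu => φ.valid hu.1 hu.2.symm

def attachPendants (G : SimpleGraph V) (f : W → V) : SimpleGraph (V ⊕ W) where
  Adj
    | .inl a, .inl b => G.Adj a b
    | .inl a, .inr w => f w = a
    | .inr w, .inl a => f w = a
    | .inr _, .inr _ => False
  symm := ⟨by rintro (a | a) (b | b) h <;> first | exact h.symm | exact h⟩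
  loopless := ⟨by rintro (a | a) h; exacts [G.irrefl h, h]⟩

namespace attachPendants

variable {G : SimpleGraph V} {f : W → V}

def embedding (G : SimpleGraph V) (f : W → V) : G ↪g G.attachPendants f :=
  ⟨⟨Sum.inl, Sum.inl_injective⟩, Iff.rfl⟩

lemma adj_sumElim_ne {φ : V → α} {χ : W → α} (hφ : ∀ u v, G.Adj u v → φ u ≠ φ v)
    (hχ : ∀ w, φ (f w) ≠ χ w) :
    ∀ x y, (G.attachPendants f).Adj x y → Sum.elim φ χ x ≠ Sum.elim φ χ y := by
  rintro (a | w) (b | w') h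
  · exact hφ a b h
  · cases (h : f w' = a); exact hχ w'
  · cases (h : f w = b); exact (hχ w).symm
  · exact h.elim

lemma colorNeighborSet_inl (φ : V → α) (χ : W → α) (v : V) (c : α) :
    (G.attachPendants f).colorNeighborSet (Sum.elim φ χ) (.inl v) c =
      Sum.inl '' G.colorNeighborSet φ v c ∪ Sum.inr '' {w | f w = v ∧ χ w = c} := by
  ext (u | w) <;> simp [colorNeighborSet, attachPendants]

lemma ncard_colorNeighborSet_inl [Finite V] [Finite W] (φ : V → α) (χ : W → α) (v : V)
    (c : α) :
    ((G.attachPendants f).colorNeighborSet (Sum.elim φ χ) (.inl v) c).ncard =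
      (G.colorNeighborSet φ v c).ncard + {w | f w = v ∧ χ w = c}.ncard := by
  rw [colorNeighborSet_inl, Set.ncard_union_eq (by simp [Set.disjoint_left]),
    Set.ncard_image_of_injective _ Sum.inl_injective,
    Set.ncard_image_of_injective _ Sum.inr_injective]

lemma colorNeighborSet_inr_subset (φ : V → α) (χ : W → α) (w : W) (c : α) :
    (G.attachPendants f).colorNeighborSet (Sum.elim φ χ) (.inr w) c ⊆ {.inl (f w)} := by
  rintro (u | w') ⟨h, -⟩
  · obtain rfl : f w = u := h
    rfl
  · exact h.elim

end attachPendants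

/-- The pairs `(v, c)` at which the strong odd condition fails for `φ`. -/
def parityDefects (G : SimpleGraph V) (φ : V → α) : Set (V × α) :=
  {p | (G.colorNeighborSet φ p.1 p.2).ncard ≠ 0 ∧ Even (G.colorNeighborSet φ p.1 p.2).ncard}

open Classical in
lemma ncard_parityDefects_fiber (G : SimpleGraph V) (φ : V → α) (v : V) (c : α) :
    {p : G.parityDefects φ | p.1.1 = v ∧ p.1.2 = c}.ncard =
      if (v, c) ∈ G.parityDefects φ then 1 else 0 := by
  split_ifs with hp
  · convert Set.ncard_singleton (⟨(v, c), hp⟩ : G.parityDefects φ)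
    ext ⟨⟨u, d⟩, _⟩
    simp
  · convert Set.ncard_empty (G.parityDefects φ)
    ext ⟨⟨u, d⟩, hud⟩
    simp only [Set.mem_ofPred_eq, Set.mem_empty_iff_false, iff_false, not_and]
    rintro rfl rfl
    exact hp hud

/-- The pendant vertex attached to `v` for a defect `(v, c)` is the pair itself;
it is to receive colour `c`. -/
def strongOddCompletion (G : SimpleGraph V) (φ : V → α) :
    SimpleGraph (V ⊕ G.parityDefects φ) :=
  G.attachPendants fun p => p.1.1

open Classical in
lemma ncard_colorNeighborSet_strongOddCompletion_inl [Finite V] [Finite α] (G : SimpleGraph V)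
    (φ : V → α) (v : V) (c : α) :
    ((G.strongOddCompletion φ).colorNeighborSet (Sum.elim φ fun p => p.1.2) (.inl v) c).ncard =
      (G.colorNeighborSet φ v c).ncard + if (v, c) ∈ G.parityDefects φ then 1 else 0 := by
  rw [strongOddCompletion, attachPendants.ncard_colorNeighborSet_inl, ncard_parityDefects_fiber]

lemma isStrongOddColoring_strongOddCompletion [Finite V] [Finite α] {G : SimpleGraph V}
    (φ : G.Coloring α) :
    IsStrongOddColoring (G.strongOddCompletion φ) (Sum.elim φ fun p => p.1.2) := by
  refine isStrongOddColoring_iff.2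
    ⟨attachPendants.adj_sumElim_ne (fun _ _ h => φ.valid h) fun p hp => ?_, fun x c => ?_⟩
  · have hnonempty := p.2.1
    rw [← hp, colorNeighborSet_self_eq_empty] at hnonempty
    exact hnonempty (Set.ncard_empty _)
  rcases x with v | p
  · rw [ncard_colorNeighborSet_strongOddCompletion_inl]
    by_cases hp : (v, c) ∈ G.parityDefects φ
    · rw [if_pos hp]
      exact .inr hp.2.add_one
    · rw [if_neg hp, add_zero]
      simp only [parityDefects, Set.mem_ofPred_eq, not_and, Nat.not_even_iff_odd] at hp
      exact or_iff_not_imp_left.2 hp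
  · have hle : ((G.strongOddCompletion φ).colorNeighborSet (Sum.elim φ fun p => p.1.2)
        (.inr p) c).ncard ≤ 1 :=
      (Set.ncard_le_ncard (attachPendants.colorNeighborSet_inr_subset φ _ p c)).trans
        (Set.ncard_singleton _).le
    interval_cases ((G.strongOddCompletion φ).colorNeighborSet _ (.inr p) c).ncard
    exacts [.inl rfl, .inr odd_one]

end SimpleGraph

/-- For every finite simple graph `G` there is a finite simple graph `H` containing `G`
as an induced subgraph with `χ_so(H) = χ(G)`. -/
theorem stmt_19 {V : Type*} [Fintype V] (G : SimpleGraph V) :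
    ∃ (k : ℕ) (H : SimpleGraph (Fin k)) (_ : G ↪g H),
      (strongOddChromaticNumber H : ℕ∞) = G.chromaticNumber := by
  have hfin : G.chromaticNumber ≠ ⊤ :=
    chromaticNumber_ne_top_iff_exists.2 ⟨_, G.colorable_of_fintype⟩
  obtain ⟨φ⟩ := colorable_of_chromaticNumber_ne_top hfin
  obtain ⟨k, ⟨e⟩⟩ := Finite.exists_equiv_fin (V ⊕ G.parityDefects φ)
  let iso := Iso.comap e.symm (G.strongOddCompletion φ)
  have hso := (isStrongOddColoring_strongOddCompletion φ).comp_iso iso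
  let ι : G ↪g _ := iso.symm.toEmbedding.comp (attachPendants.embedding G _)
  refine ⟨k, _, ι, le_antisymm ?_ ?_⟩
  · exact (Nat.cast_le.2 (strongOddChromaticNumber_le hso)).trans_eq
      (ENat.natCast_toNat hfin)
  · exact (chromaticNumber_mono_of_hom ι.toHom).trans
      (chromaticNumber_le_strongOddChromaticNumber hso)
end
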